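/- Step-by-step decrease of colors: if the natural color of v with respect to u is c > 1, then there exists z ∈ Σ* such that vz is u-invariant and the natural color of vz with respect to u is exactly c − 1. -/

import Mathlib

open scoped Classical

/-- Concatenation of a finite word with an infinite word. -/
def wcat {A : Type} (u : List A) (w : ℕ → A) : ℕ → A :=
  fun n => if h : n < u.length then u.get ⟨n, h⟩ else w (n - u.length)

/-- The infinite periodic word `v^ω`. -/
def wpow {A : Type} [Inhabited A] (v : List A) : ℕ → A :=
  fun n => v.getD (n % v.length) default

/-- The ultimately periodic word `u · v^ω`. -/
def upw {A : Type} [Inhabited A] (u v : List A) : ℕ → A := wcat u (wpow v)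

/-- The finite word `v^i`. -/
def wrep {A : Type} (v : List A) (i : ℕ) : List A := (List.replicate i v).flatten

/-- The right congruence `x ∼_L y`. -/
def simL {A : Type} (L : Set (ℕ → A)) (x y : List A) : Prop :=
  ∀ w : ℕ → A, wcat x w ∈ L ↔ wcat y w ∈ L

/-- `w` is `u`-invariant: `u ∼_L u·w`. -/
def UInv {A : Type} (L : Set (ℕ → A)) (u w : List A) : Prop := simL L u (u ++ w)

/-- `v` is relevant to `u`. -/
def URel {A : Type} (L : Set (ℕ → A)) (u v : List A) : Prop :=
  ∃ z : List A, UInv L u (v ++ z)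

/-- `v` has natural color at most `c` wrt `u`. -/
def ColorAtMost {A : Type} [Inhabited A] (L : Set (ℕ → A)) (u : List A) :
    ℕ → List A → Prop
  | c, v => ∀ z : List A, UInv L u (v ++ z) →
      ((upw u (v ++ z) ∈ L ↔ Even c) ∨
        ∃ i : ℕ, 0 < i ∧ ∃ c' : Fin c, ColorAtMost L u c' (wrep (v ++ z) i))
  termination_by c => c
  decreasing_by exact c'.isLt

/-- The natural color of the finite word `v` wrt `u`: `⊥` (i.e. `-∞`) if `v` is
irrelevant to `u`, and otherwise the minimal `c ≥ 0` as in the paper. -/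
noncomputable def ncol {A : Type} [Inhabited A] (L : Set (ℕ → A)) (u v : List A) :
    WithBot ℕ :=
  if URel L u v then ((sInf {c : ℕ | ColorAtMost L u c v} : ℕ) : WithBot ℕ) else ⊥

/-- `v` is stable wrt `u`. -/
def Stable {A : Type} [Inhabited A] (L : Set (ℕ → A)) (u v : List A) : Prop :=
  ∀ i : ℕ, 0 < i → ncol L u v = ncol L u (wrep v i)

/-- `v` is `u`-reliable. -/
def UReliable {A : Type} [Inhabited A] (L : Set (ℕ → A)) (u v : List A) : Prop :=
  UInv L u v ∧ Stable L u v

/-- The natural color of an ultimately periodic infinite word. -/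
noncomputable def icol {A : Type} [Inhabited A] (L : Set (ℕ → A)) (w : ℕ → A) : ℕ :=
  sInf {c : ℕ | ∃ u v : List A, v ≠ [] ∧ w = upw u v ∧ UInv L u v ∧
    ncol L u v = (c : WithBot ℕ)}

/-- The set of states visited infinitely often by a run. -/
def infSet {Q : Type} (r : ℕ → Q) : Set Q := {q | ∀ n : ℕ, ∃ m : ℕ, n ≤ m ∧ r m = q}

/-- The run of a complete deterministic automaton on an infinite word. -/
def runOf {A Q : Type} (δ : Q → A → Q) (q0 : Q) (w : ℕ → A) : ℕ → Q
  | 0 => q0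
  | n + 1 => δ (runOf δ q0 w n) (w n)

/-- `L` is ω-regular: recognized by some deterministic Muller automaton. -/
def OmegaRegular {A : Type} (L : Set (ℕ → A)) : Prop :=
  ∃ (Q : Type) (_ : Fintype Q) (q0 : Q) (δ : Q → A → Q) (α : Set (Set Q)),
    ∀ w : ℕ → A, w ∈ L ↔ infSet (runOf δ q0 w) ∈ α

/-!
Since `v` has color `c` but not color at most `c - 2`, some `u`-invariant extension `vz` has
`u(vz)^ω` of parity opposite to `c`, while no power of `vz` has color below `c - 2`. A power `W`
of `vz` of least color cannot use the escape clause of the definition, so the parity of its color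
is that of `u W^ω = u(vz)^ω`. As an extension of `v`, `W` has color at most `c`; hence its color
is `c - 1`.
-/

section Words

variable {A : Type}

lemma wcat_append (x a : List A) (f : ℕ → A) : wcat (x ++ a) f = wcat x (wcat a f) := by
  funext n
  simp only [wcat, List.length_append]
  by_cases h1 : n < x.length
  · simp only [show n < x.length + a.length by omega, dif_pos, h1]
    exact List.getElem_append_left h1
  · by_cases h2 : n < x.length + a.length
    · simp only [h2, dif_pos, h1, dif_neg, not_false_iff, show n - x.length < a.length by omega]
      exact List.getElem_append_right (by omega)
    · simp [h1, h2, show ¬ (n - x.length < a.length) by omega, Nat.sub_sub]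

lemma wrep_succ (w : List A) (i : ℕ) : wrep w (i + 1) = w ++ wrep w i := by
  simp only [wrep, List.replicate_succ, List.flatten_cons]

lemma wrep_add (w : List A) (a b : ℕ) : wrep w (a + b) = wrep w a ++ wrep w b := by
  simp only [wrep, List.replicate_add, List.flatten_append]

lemma wrep_mul (w : List A) (a b : ℕ) : wrep (wrep w a) b = wrep w (a * b) := by
  induction b with
  | zero => rfl
  | succ b ih => rw [wrep_succ, ih, ← wrep_add, Nat.mul_succ, Nat.add_comm]

lemma exists_wrep_eq_append (w : List A) {i : ℕ} (hi : 0 < i) : ∃ s, wrep w i = w ++ s := by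
  obtain ⟨i, rfl⟩ := Nat.exists_eq_add_one.mpr hi
  exact ⟨wrep w i, wrep_succ w i⟩

lemma length_wrep (w : List A) (i : ℕ) : (wrep w i).length = i * w.length := by
  simp [wrep, List.length_flatten, List.sum_replicate]

lemma getD_wrep (w : List A) (d : A) {k m : ℕ} (hm : m < k * w.length) :
    (wrep w k).getD m d = w.getD (m % w.length) d := by
  induction k generalizing m with
  | zero => omega
  | succ k ih =>
    rw [wrep_succ]
    by_cases h : m < w.length
    · rw [List.getD_append _ _ _ _ h, Nat.mod_eq_of_lt h]
    · rw [List.getD_append_right _ _ _ _ (by omega), ih (by rw [Nat.succ_mul] at hm; omega),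
        ← Nat.mod_eq_sub_mod (by omega)]

end Words

section Periodic

variable {A : Type} [Inhabited A]

lemma wpow_wrep (w : List A) {k : ℕ} (hk : 0 < k) : wpow (wrep w k) = wpow w := by
  rcases eq_or_ne w [] with rfl | hw
  · simp [wrep]
  funext n
  have hlen : 0 < k * w.length := Nat.mul_pos hk (List.length_pos_iff.mpr hw)
  simp only [wpow, length_wrep]
  rw [getD_wrep w default (Nat.mod_lt _ hlen), Nat.mod_mod_of_dvd n (Nat.dvd_mul_left _ _)]

lemma upw_wrep (x w : List A) {k : ℕ} (hk : 0 < k) : upw x (wrep w k) = upw x w := by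
  rw [upw, upw, wpow_wrep w hk]

end Periodic

section Invariance

variable {A : Type} {L : Set (ℕ → A)}

lemma simL.append_right {x y : List A} (h : simL L x y) (a : List A) :
    simL L (x ++ a) (y ++ a) := fun w => by
  rw [wcat_append, wcat_append]
  exact h _

lemma uInv_wrep {u w : List A} (h : UInv L u w) (i : ℕ) : UInv L u (wrep w i) := by
  induction i with
  | zero => simp [UInv, simL, wrep]
  | succ i ih =>
    intro f
    rw [wrep_succ, ← List.append_assoc]
    exact (ih f).trans (h.append_right _ f)

end Invariance

section Colors

variable {A : Type} [Inhabited A] {L : Set (ℕ → A)} {u : List A}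

lemma colorAtMost_iff (c : ℕ) (v : List A) : ColorAtMost L u c v ↔
    ∀ z : List A, UInv L u (v ++ z) →
      ((upw u (v ++ z) ∈ L ↔ Even c) ∨
        ∃ i : ℕ, 0 < i ∧ ∃ c' : Fin c, ColorAtMost L u c' (wrep (v ++ z) i)) := by
  rw [ColorAtMost]

lemma not_colorAtMost_iff {c : ℕ} {v : List A} : ¬ ColorAtMost L u c v ↔
    ∃ z : List A, UInv L u (v ++ z) ∧ ¬ (upw u (v ++ z) ∈ L ↔ Even c) ∧
      ∀ i : ℕ, 0 < i → ∀ c' < c, ¬ ColorAtMost L u c' (wrep (v ++ z) i) := by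
  rw [colorAtMost_iff]
  simp only [not_forall, not_or, not_exists, not_and, Fin.forall_iff, exists_prop]

lemma ColorAtMost.append {c : ℕ} {v : List A} (h : ColorAtMost L u c v) (s : List A) :
    ColorAtMost L u c (v ++ s) := by
  rw [colorAtMost_iff] at h ⊢
  intro z hz
  simpa only [List.append_assoc] using h (s ++ z) (by rwa [← List.append_assoc])

/-- Since `sInf ∅ = 0`, this is `0` also when `v` has no color bound at all. -/
noncomputable def colorNat (L : Set (ℕ → A)) (u v : List A) : ℕ :=
  sInf {c : ℕ | ColorAtMost L u c v}

lemma colorNat_le {c : ℕ} {v : List A} (h : ColorAtMost L u c v) : colorNat L u v ≤ c :=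
  Nat.sInf_le h

lemma colorAtMost_colorNat {c : ℕ} {v : List A} (h : ColorAtMost L u c v) :
    ColorAtMost L u (colorNat L u v) v :=
  Nat.sInf_mem (s := {c | ColorAtMost L u c v}) ⟨c, h⟩

lemma ncol_of_uInv {v : List A} (h : UInv L u v) : ncol L u v = colorNat L u v := by
  rw [ncol, if_pos ⟨[], by rwa [List.append_nil]⟩, colorNat]

lemma colorAtMost_of_ncol_eq {c : ℕ} {v : List A} (hc : ncol L u v = c) (hc0 : c ≠ 0) :
    ColorAtMost L u c v ∧ colorNat L u v = c := by
  unfold ncol at hc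
  split_ifs at hc
  · have hcol : colorNat L u v = c := WithBot.coe_injective hc
    refine ⟨?_, hcol⟩
    rw [← hcol]
    exact Nat.sInf_mem (Nat.nonempty_of_pos_sInf (hcol ▸ Nat.pos_of_ne_zero hc0))
  · exact (WithBot.bot_ne_coe hc).elim

lemma exists_pos_forall_pos_le (f : ℕ → ℕ) : ∃ i, 0 < i ∧ ∀ j, 0 < j → f i ≤ f j :=
  ⟨_, Function.argminOn_mem f {i | 0 < i} ⟨1, Nat.one_pos⟩, fun _ hj => Function.argminOn_le f _ hj⟩

lemma exists_wrep_upw_mem_iff_even {c : ℕ} {w : List A} (hw : UInv L u w)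
    (hcam : ColorAtMost L u c w) :
    ∃ i, 0 < i ∧ (upw u w ∈ L ↔ Even (colorNat L u (wrep w i))) := by
  obtain ⟨i, hi, hmin⟩ := exists_pos_forall_pos_le fun i => colorNat L u (wrep w i)
  refine ⟨i, hi, ?_⟩
  obtain ⟨s, hs⟩ := exists_wrep_eq_append w hi
  have hcamW := colorAtMost_colorNat (c := c) (hs ▸ hcam.append s)
  rcases (colorAtMost_iff _ _).mp hcamW [] (by simpa using uInv_wrep hw i) with
    hpar | ⟨j, hj, c', hc'⟩
  · rwa [List.append_nil, upw_wrep u w hi] at hpar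
  · simp only [List.append_nil, wrep_mul] at hc'
    exact absurd ((hmin _ (Nat.mul_pos hi hj)).trans (colorNat_le hc')) (not_le.mpr c'.isLt)

end Colors

theorem color_step_by_step_general {A : Type} [Inhabited A] (L : Set (ℕ → A))
    (u v : List A) (c : ℕ)
    (hc : ncol L u v = (c : WithBot ℕ)) (h1 : 1 < c) :
    ∃ z : List A, UInv L u (v ++ z) ∧ ncol L u (v ++ z) = ((c - 1 : ℕ) : WithBot ℕ) := by
  obtain ⟨hcam, hcol⟩ := colorAtMost_of_ncol_eq hc (by omega)
  have hnot : ¬ ColorAtMost L u (c - 2) v := fun h => by have := colorNat_le h; omega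
  obtain ⟨z, hz, hpar, hlow⟩ := not_colorAtMost_iff.mp hnot
  obtain ⟨i, hi, hparW⟩ := exists_wrep_upw_mem_iff_even hz (hcam.append z)
  obtain ⟨s, hs⟩ := exists_wrep_eq_append (v ++ z) hi
  rw [hs] at hparW
  have hW : UInv L u (v ++ z ++ s) := hs ▸ uInv_wrep hz i
  have hcamW : ColorAtMost L u c (v ++ z ++ s) := hcam.append z |>.append s
  have hupper : colorNat L u (v ++ z ++ s) ≤ c := colorNat_le hcamW
  have hlower : c - 2 ≤ colorNat L u (v ++ z ++ s) :=
    not_lt.mp fun hlt => hlow i hi _ hlt (by rw [hs]; exact colorAtMost_colorNat hcamW)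
  have hparity : ¬ (Even (colorNat L u (v ++ z ++ s)) ↔ Even (c - 2)) := by rwa [hparW] at hpar
  simp only [Nat.even_iff] at hparity
  refine ⟨z ++ s, by rwa [← List.append_assoc], ?_⟩
  rw [← List.append_assoc, ncol_of_uInv hW]
  exact congrArg _ (by omega)

/-- step-by-step decrease of colors. -/
theorem color_step_by_step {A : Type} [Inhabited A] (L : Set (ℕ → A))
    (hreg : OmegaRegular L) (u v : List A) (hv : v ≠ []) (c : ℕ)
    (hc : ncol L u v = (c : WithBot ℕ)) (h1 : 1 < c) :
    ∃ z : List A, UInv L u (v ++ z) ∧ ncol L u (v ++ z) = ((c - 1 : ℕ) : WithBot ℕ) :=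
  color_step_by_step_general L u v c hc h1
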